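/- arXiv:2308.15748 — 4 statements merged into one kernel-verified Lean document; each statement's English description precedes it below -/
import Mathlib

section
/- For all complex u, v and τ with Im τ > 0, 2 θ1(u+v|2τ) θ4(u−v|2τ) = θ1(u|τ) θ2(v|τ) + θ2(u|τ) θ1(v|τ). -/
open Complex

noncomputable def jTheta1 (u τ : ℂ) : ℂ :=
  -I * ∑' k : ℤ, (-1 : ℂ) ^ k *
    exp (Real.pi * I * τ * ((k : ℂ) + 1/2)^2) * exp (Real.pi * I * (2*(k : ℂ) + 1) * u)

noncomputable def jTheta2 (u τ : ℂ) : ℂ :=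
  ∑' k : ℤ, exp (Real.pi * I * τ * ((k : ℂ) + 1/2)^2) * exp (Real.pi * I * (2*(k : ℂ) + 1) * u)

noncomputable def jTheta3 (u τ : ℂ) : ℂ :=
  ∑' k : ℤ, exp (Real.pi * I * τ * (k : ℂ)^2) * exp (2 * Real.pi * I * (k : ℂ) * u)

noncomputable def jTheta4 (u τ : ℂ) : ℂ :=
  ∑' k : ℤ, (-1 : ℂ) ^ k * exp (Real.pi * I * τ * (k : ℂ)^2) * exp (2 * Real.pi * I * (k : ℂ) * u)

noncomputable def T1 (u τ : ℂ) (k : ℤ) : ℂ :=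
  (-1 : ℂ) ^ k * exp (Real.pi * I * τ * ((k : ℂ) + 1/2)^2 + Real.pi * I * (2*(k : ℂ) + 1) * u)

noncomputable def T2 (u τ : ℂ) (k : ℤ) : ℂ :=
  exp (Real.pi * I * τ * ((k : ℂ) + 1/2)^2 + Real.pi * I * (2*(k : ℂ) + 1) * u)

noncomputable def T4 (u τ : ℂ) (k : ℤ) : ℂ :=
  (-1 : ℂ) ^ k * exp (Real.pi * I * τ * (k : ℂ)^2 + 2 * Real.pi * I * (k : ℂ) * u)

lemma summable_norm_jt (z τ : ℂ) (hτ : 0 < τ.im) :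
    Summable fun n : ℤ => ‖jacobiTheta₂_term n z τ‖ := by
  apply (summable_pow_mul_jacobiTheta₂_term_bound |z.im| hτ 0).of_nonneg_of_le
    (fun n => norm_nonneg _)
  intro n
  simpa only [pow_zero, one_mul] using norm_jacobiTheta₂_term_le hτ le_rfl le_rfl n

lemma hT2 (u τ : ℂ) (k : ℤ) :
    T2 u τ k = exp ((Real.pi : ℂ) * I * τ / 4 + Real.pi * I * u) * jacobiTheta₂_term k (u + τ/2) τ := by
  rw [T2, jacobiTheta₂_term, ← Complex.exp_add]
  congr 1
  push_cast
  ring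

lemma hT1 (u τ : ℂ) (k : ℤ) :
    T1 u τ k = (-1 : ℂ) ^ k * (exp ((Real.pi : ℂ) * I * τ / 4 + Real.pi * I * u) * jacobiTheta₂_term k (u + τ/2) τ) := by
  rw [T1, ← hT2, T2]

lemma hT4 (u τ : ℂ) (k : ℤ) :
    T4 u τ k = (-1 : ℂ) ^ k * jacobiTheta₂_term k u τ := by
  rw [T4, jacobiTheta₂_term]
  congr 2
  push_cast
  ring

lemma norm_neg_one_zpow (k : ℤ) : ‖(-1 : ℂ) ^ k‖ = 1 := by
  rw [norm_zpow, norm_neg, norm_one, one_zpow]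

lemma summable_norm_T1 (u τ : ℂ) (hτ : 0 < τ.im) : Summable fun k : ℤ => ‖T1 u τ k‖ := by
  refine (((summable_norm_jt (u + τ/2) τ hτ).mul_left
    ‖exp ((Real.pi : ℂ) * I * τ / 4 + Real.pi * I * u)‖).congr fun k => ?_)
  rw [hT1, norm_mul, norm_neg_one_zpow, one_mul, norm_mul]

lemma summable_norm_T2 (u τ : ℂ) (hτ : 0 < τ.im) : Summable fun k : ℤ => ‖T2 u τ k‖ := by
  refine (((summable_norm_jt (u + τ/2) τ hτ).mul_left
    ‖exp ((Real.pi : ℂ) * I * τ / 4 + Real.pi * I * u)‖).congr fun k => ?_)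
  rw [hT2, norm_mul]

lemma summable_norm_T4 (u τ : ℂ) (hτ : 0 < τ.im) : Summable fun k : ℤ => ‖T4 u τ k‖ := by
  refine ((summable_norm_jt u τ hτ).congr fun k => ?_)
  rw [hT4, norm_mul, norm_neg_one_zpow, one_mul]

lemma neg_one_zpow_add (m n : ℤ) : (-1 : ℂ) ^ (m + n) = (-1) ^ m * (-1) ^ n :=
  zpow_add₀ (by norm_num) m n

lemma neg_one_zpow_self (n : ℤ) : (-1 : ℂ) ^ n * (-1) ^ n = 1 := by
  rw [← mul_zpow]; norm_num

lemma neg_one_zpow_sub (m n : ℤ) : (-1 : ℂ) ^ (m - n) = (-1) ^ m * (-1) ^ n := by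
  rw [zpow_sub₀ (by norm_num : (-1 : ℂ) ≠ 0), div_eq_mul_inv,
    inv_eq_of_mul_eq_one_right (neg_one_zpow_self n)]

lemma key_pointwise (u v τ : ℂ) (m n : ℤ) :
    T1 u τ (m + n) * T2 v τ (m - n) + T2 u τ (m + n) * T1 v τ (m - n) =
      2 * (T1 (u + v) (2*τ) m * T4 (u - v) (2*τ) n) := by
  simp only [T1, T2, T4, neg_one_zpow_add, neg_one_zpow_sub]
  set a := cexp ((Real.pi : ℂ) * I * τ * (((m + n : ℤ) : ℂ) + 1/2)^2 + Real.pi * I * (2*((m + n : ℤ) : ℂ) + 1) * u)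
  set b := cexp ((Real.pi : ℂ) * I * τ * (((m - n : ℤ) : ℂ) + 1/2)^2 + Real.pi * I * (2*((m - n : ℤ) : ℂ) + 1) * v)
  set c := cexp ((Real.pi : ℂ) * I * (2*τ) * ((m : ℂ) + 1/2)^2 + Real.pi * I * (2*(m : ℂ) + 1) * (u + v))
  set d := cexp ((Real.pi : ℂ) * I * (2*τ) * (n : ℂ)^2 + 2 * Real.pi * I * (n : ℂ) * (u - v))
  have hab : a * b = c * d := by
    rw [← Complex.exp_add, ← Complex.exp_add]
    congr 1
    push_cast
    ring
  linear_combination ((-1 : ℂ) ^ m * (-1) ^ n) * 2 * hab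

lemma key_vanish (u v τ : ℂ) (k l : ℤ) (h : Odd (k + l)) :
    T1 u τ k * T2 v τ l + T2 u τ k * T1 v τ l = 0 := by
  have hs : (-1 : ℂ) ^ k * (-1) ^ l = -1 := by
    rw [← neg_one_zpow_add]; exact Odd.neg_one_zpow h
  simp only [T1, T2]
  set A := cexp ((Real.pi : ℂ) * I * τ * ((k : ℂ) + 1/2)^2 + Real.pi * I * (2*(k : ℂ) + 1) * u)
  set B := cexp ((Real.pi : ℂ) * I * τ * ((l : ℂ) + 1/2)^2 + Real.pi * I * (2*(l : ℂ) + 1) * v)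
  linear_combination A * B * (-1 : ℂ) ^ k * hs - A * B * (-1 : ℂ) ^ l * (neg_one_zpow_self k)

theorem theta_doubling_identity (u v τ : ℂ) (hτ : 0 < τ.im) :
    2 * jTheta1 (u + v) (2*τ) * jTheta4 (u - v) (2*τ) =
      jTheta1 u τ * jTheta2 v τ + jTheta2 u τ * jTheta1 v τ := by
  have h2τ : 0 < (2*τ).im := by
    have h : (2*τ).im = 2 * τ.im := by simp
    rw [h]; linarith
  have hj1 : ∀ w σ : ℂ, jTheta1 w σ = -I * ∑' k : ℤ, T1 w σ k := by
    intro w σ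
    rw [jTheta1]
    congr 1
    exact tsum_congr fun k => by rw [T1, Complex.exp_add, mul_assoc]
  have hj2 : ∀ w σ : ℂ, jTheta2 w σ = ∑' k : ℤ, T2 w σ k := by
    intro w σ
    rw [jTheta2]
    exact tsum_congr fun k => by rw [T2, Complex.exp_add]
  have hj4 : ∀ w σ : ℂ, jTheta4 w σ = ∑' k : ℤ, T4 w σ k := by
    intro w σ
    rw [jTheta4]
    exact tsum_congr fun k => by rw [T4, Complex.exp_add, mul_assoc]
  rw [hj1, hj1, hj1, hj2, hj2, hj4]
  have s1 : Summable fun p : ℤ × ℤ => T1 u τ p.1 * T2 v τ p.2 :=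
    summable_mul_of_summable_norm (summable_norm_T1 u τ hτ) (summable_norm_T2 v τ hτ)
  have s2 : Summable fun p : ℤ × ℤ => T2 u τ p.1 * T1 v τ p.2 :=
    summable_mul_of_summable_norm (summable_norm_T2 u τ hτ) (summable_norm_T1 v τ hτ)
  have hinj : Function.Injective (fun p : ℤ × ℤ => (p.1 + p.2, p.1 - p.2)) := by
    intro ⟨a, b⟩ ⟨c, d⟩ h
    simp only [Prod.mk.injEq] at h
    exact Prod.ext (by omega) (by omega)
  have hsupp : Function.support
      (fun p : ℤ × ℤ => T1 u τ p.1 * T2 v τ p.2 + T2 u τ p.1 * T1 v τ p.2) ⊆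
      Set.range (fun p : ℤ × ℤ => (p.1 + p.2, p.1 - p.2)) := by
    intro ⟨a, b⟩ hp
    rcases Int.even_or_odd (a + b) with he | ho
    · obtain ⟨c, hc⟩ := he
      exact ⟨(c, a - c), by simp only [Prod.mk.injEq]; omega⟩
    · exact absurd (key_vanish u v τ a b ho) hp
  have core : 2 * ((∑' k : ℤ, T1 (u+v) (2*τ) k) * ∑' k : ℤ, T4 (u-v) (2*τ) k)
      = (∑' k : ℤ, T1 u τ k) * (∑' k : ℤ, T2 v τ k)
        + (∑' k : ℤ, T2 u τ k) * (∑' k : ℤ, T1 v τ k) := by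
    rw [tsum_mul_tsum_of_summable_norm (summable_norm_T1 _ _ h2τ) (summable_norm_T4 _ _ h2τ),
        tsum_mul_tsum_of_summable_norm (summable_norm_T1 u τ hτ) (summable_norm_T2 v τ hτ),
        tsum_mul_tsum_of_summable_norm (summable_norm_T2 u τ hτ) (summable_norm_T1 v τ hτ),
        ← Summable.tsum_add s1 s2, ← tsum_mul_left,
        ← Function.Injective.tsum_eq hinj hsupp]
    exact tsum_congr fun p => (key_pointwise u v τ p.1 p.2).symm
  linear_combination (-I) * core
end

section
/- For all complex u, v and τ with Im τ > 0, θ1(u|τ) θ2(v|τ) = θ1(u+v|2τ) θ4(u−v|2τ) + θ4(u+v|2τ) θ1(u−v|2τ). -/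
open Complex

namespace ThetaAux

noncomputable def t1 (u τ : ℂ) (k : ℤ) : ℂ :=
  (-1 : ℂ) ^ k * exp (Real.pi * I * τ * ((k : ℂ) + 1/2)^2) *
    exp (Real.pi * I * (2*(k : ℂ) + 1) * u)

noncomputable def t2 (u τ : ℂ) (k : ℤ) : ℂ :=
  exp (Real.pi * I * τ * ((k : ℂ) + 1/2)^2) * exp (Real.pi * I * (2*(k : ℂ) + 1) * u)

noncomputable def t4 (u τ : ℂ) (k : ℤ) : ℂ :=
  (-1 : ℂ) ^ k * exp (Real.pi * I * τ * (k : ℂ)^2) * exp (2 * Real.pi * I * (k : ℂ) * u)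

lemma neg_one_zpow (k : ℤ) : ((-1 : ℂ)) ^ k = exp ((k : ℂ) * (Real.pi * I)) := by
  rw [Complex.exp_int_mul, Complex.exp_pi_mul_I]

lemma t1_eq (u τ : ℂ) (k : ℤ) :
    t1 u τ k = exp (Real.pi * I * τ/4 + Real.pi * I * u) *
      jacobiTheta₂_term k (u + τ/2 + 1/2) τ := by
  rw [t1, neg_one_zpow, jacobiTheta₂_term, ← Complex.exp_add, ← Complex.exp_add,
    ← Complex.exp_add]
  congr 1
  ring

lemma t2_eq (u τ : ℂ) (k : ℤ) :
    t2 u τ k = exp (Real.pi * I * τ/4 + Real.pi * I * u) *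
      jacobiTheta₂_term k (u + τ/2) τ := by
  rw [t2, jacobiTheta₂_term, ← Complex.exp_add, ← Complex.exp_add]
  congr 1
  ring

lemma t4_eq (u τ : ℂ) (k : ℤ) :
    t4 u τ k = jacobiTheta₂_term k (u + 1/2) τ := by
  rw [t4, neg_one_zpow, jacobiTheta₂_term, ← Complex.exp_add, ← Complex.exp_add]
  congr 1
  ring

lemma summable_norm_jt (z τ : ℂ) (hτ : 0 < τ.im) :
    Summable fun k : ℤ => ‖jacobiTheta₂_term k z τ‖ := by
  refine Summable.of_nonneg_of_le (fun n => norm_nonneg _) (fun n => ?_)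
    (summable_pow_mul_jacobiTheta₂_term_bound |z.im| hτ 0)
  simpa only [pow_zero, one_mul] using norm_jacobiTheta₂_term_le hτ le_rfl le_rfl n

lemma sn1 (u τ : ℂ) (hτ : 0 < τ.im) : Summable fun k : ℤ => ‖t1 u τ k‖ := by
  simp only [t1_eq, norm_mul]
  exact (summable_norm_jt _ _ hτ).mul_left _

lemma sn2 (u τ : ℂ) (hτ : 0 < τ.im) : Summable fun k : ℤ => ‖t2 u τ k‖ := by
  simp only [t2_eq, norm_mul]
  exact (summable_norm_jt _ _ hτ).mul_left _

lemma sn4 (u τ : ℂ) (hτ : 0 < τ.im) : Summable fun k : ℤ => ‖t4 u τ k‖ := by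
  simp only [t4_eq]
  exact summable_norm_jt _ _ hτ

def φ₁ (p : ℤ × ℤ) : ℤ × ℤ := (p.1 + p.2, p.1 - p.2)

def φ₂ (p : ℤ × ℤ) : ℤ × ℤ := (p.1 + p.2, p.1 - p.2 - 1)

lemma hinj1 : Function.Injective φ₁ := by
  rintro ⟨a, b⟩ ⟨c, d⟩ h
  simp only [φ₁, Prod.ext_iff] at h ⊢
  omega

lemma hinj2 : Function.Injective φ₂ := by
  rintro ⟨a, b⟩ ⟨c, d⟩ h
  simp only [φ₂, Prod.ext_iff] at h ⊢
  omega

lemma hcompl : IsCompl (Set.range φ₁) (Set.range φ₂) := by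
  constructor
  · rw [Set.disjoint_left]
    rintro p ⟨⟨a, b⟩, rfl⟩ ⟨⟨c, d⟩, h⟩
    simp only [φ₁, φ₂, Prod.ext_iff] at h
    omega
  · rw [codisjoint_iff_le_sup]
    rintro ⟨k, l⟩ -
    simp only [Set.sup_eq_union, Set.mem_union, Set.mem_range]
    rcases Int.even_or_odd (k + l) with ⟨m, hm⟩ | ⟨m, hm⟩
    · exact Or.inl ⟨(m, k - m), by simp only [φ₁, Prod.ext_iff]; omega⟩
    · exact Or.inr ⟨(m + 1, k - m - 1), by simp only [φ₂, Prod.ext_iff]; omega⟩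

lemma key1 (u v τ : ℂ) (p : ℤ × ℤ) :
    t1 u τ (p.1 + p.2) * t2 v τ (p.1 - p.2) =
      t1 (u + v) (2*τ) p.1 * t4 (u - v) (2*τ) p.2 := by
  obtain ⟨a, b⟩ := p
  simp only [t1_eq, t2_eq, t4_eq, jacobiTheta₂_term, ← Complex.exp_add]
  congr 1
  push_cast
  ring

lemma key2 (u v τ : ℂ) (p : ℤ × ℤ) :
    t1 u τ (p.1 + p.2) * t2 v τ (p.1 - p.2 - 1) =
      t4 (u + v) (2*τ) p.1 * t1 (u - v) (2*τ) p.2 := by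
  obtain ⟨a, b⟩ := p
  simp only [t1_eq, t2_eq, t4_eq, jacobiTheta₂_term, ← Complex.exp_add]
  congr 1
  push_cast
  ring

end ThetaAux

open ThetaAux in
theorem theta_product_identity (u v τ : ℂ) (hτ : 0 < τ.im) :
    jTheta1 u τ * jTheta2 v τ =
      jTheta1 (u + v) (2*τ) * jTheta4 (u - v) (2*τ) +
        jTheta4 (u + v) (2*τ) * jTheta1 (u - v) (2*τ) := by
  have hτ2 : 0 < (2*τ).im := by
    have : (2*τ).im = 2 * τ.im := by simp [Complex.mul_im]
    rw [this]; linarith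
  have e1 : ∀ w σ : ℂ, jTheta1 w σ = -I * ∑' k : ℤ, t1 w σ k := fun _ _ => rfl
  have e2 : jTheta2 v τ = ∑' k : ℤ, t2 v τ k := rfl
  have e4 : ∀ w σ : ℂ, jTheta4 w σ = ∑' k : ℤ, t4 w σ k := fun _ _ => rfl
  have h1 := sn1 u τ hτ
  have h2 := sn2 v τ hτ
  have h1p := sn1 (u + v) (2*τ) hτ2
  have h4m := sn4 (u - v) (2*τ) hτ2
  have h4p := sn4 (u + v) (2*τ) hτ2
  have h1m := sn1 (u - v) (2*τ) hτ2
  set F : ℤ × ℤ → ℂ := fun p => t1 u τ p.1 * t2 v τ p.2 with hF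
  have G1 : HasSum (F ∘ φ₁)
      (∑' p : ℤ × ℤ, t1 (u + v) (2*τ) p.1 * t4 (u - v) (2*τ) p.2) := by
    have hfe : (F ∘ φ₁) = fun p : ℤ × ℤ =>
        t1 (u + v) (2*τ) p.1 * t4 (u - v) (2*τ) p.2 := funext fun p => key1 u v τ p
    rw [hfe]
    exact (summable_mul_of_summable_norm h1p h4m).hasSum
  have G2 : HasSum (F ∘ φ₂)
      (∑' p : ℤ × ℤ, t4 (u + v) (2*τ) p.1 * t1 (u - v) (2*τ) p.2) := by
    have hfe : (F ∘ φ₂) = fun p : ℤ × ℤ =>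
        t4 (u + v) (2*τ) p.1 * t1 (u - v) (2*τ) p.2 := funext fun p => key2 u v τ p
    rw [hfe]
    exact (summable_mul_of_summable_norm h4p h1m).hasSum
  have Htot : HasSum F
      ((∑' p : ℤ × ℤ, t1 (u + v) (2*τ) p.1 * t4 (u - v) (2*τ) p.2) +
        (∑' p : ℤ × ℤ, t4 (u + v) (2*τ) p.1 * t1 (u - v) (2*τ) p.2)) :=
    HasSum.add_isCompl hcompl (hinj1.hasSum_range_iff.mpr G1)
      (hinj2.hasSum_range_iff.mpr G2)
  have main : (∑' k : ℤ, t1 u τ k) * (∑' k : ℤ, t2 v τ k) =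
      (∑' p : ℤ × ℤ, t1 (u + v) (2*τ) p.1 * t4 (u - v) (2*τ) p.2) +
        (∑' p : ℤ × ℤ, t4 (u + v) (2*τ) p.1 * t1 (u - v) (2*τ) p.2) := by
    rw [tsum_mul_tsum_of_summable_norm h1 h2]
    exact Htot.tsum_eq
  rw [e1, e2, e1, e4, e4, e1,
    ← tsum_mul_tsum_of_summable_norm h1p h4m,
    ← tsum_mul_tsum_of_summable_norm h4p h1m] at *
  calc (-I * ∑' k : ℤ, t1 u τ k) * ∑' k : ℤ, t2 v τ k
      = -I * ((∑' k : ℤ, t1 u τ k) * ∑' k : ℤ, t2 v τ k) := by ring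
    _ = -I * ((∑' k : ℤ, t1 (u + v) (2*τ) k) * (∑' k : ℤ, t4 (u - v) (2*τ) k) +
          (∑' k : ℤ, t4 (u + v) (2*τ) k) * (∑' k : ℤ, t1 (u - v) (2*τ) k)) := by
        rw [main]
    _ = (-I * ∑' k : ℤ, t1 (u + v) (2*τ) k) * (∑' k : ℤ, t4 (u - v) (2*τ) k) +
          (∑' k : ℤ, t4 (u + v) (2*τ) k) * (-I * ∑' k : ℤ, t1 (u - v) (2*τ) k) := by
        ring
end

section
/- The three-term identity: for all complex x, y, ξ, v and τ with Im τ > 0, θ1(x)θ2(y+ξ)θ2(v+y)θ1(v−ξ−x) − θ2(0)θ1(x+y+ξ)θ1(v−x+y)θ2(v−ξ) = −θ2(x)θ1(y+ξ)θ1(v+y)θ2(v−ξ−x), where all theta functions have modular parameter τ. -/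
open Complex

namespace ThetaAux

noncomputable def T1 (u τ : ℂ) (k : ℤ) : ℂ :=
  (-1 : ℂ) ^ k * exp (Real.pi * I * τ * ((k : ℂ) + 1/2)^2) * exp (Real.pi * I * (2*(k : ℂ) + 1) * u)

noncomputable def T2 (u τ : ℂ) (k : ℤ) : ℂ :=
  exp (Real.pi * I * τ * ((k : ℂ) + 1/2)^2) * exp (Real.pi * I * (2*(k : ℂ) + 1) * u)

noncomputable def T4 (u τ : ℂ) (k : ℤ) : ℂ :=
  (-1 : ℂ) ^ k * exp (Real.pi * I * τ * (k : ℂ)^2) * exp (2 * Real.pi * I * (k : ℂ) * u)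

lemma jTheta1_def (u τ : ℂ) : jTheta1 u τ = -I * ∑' k : ℤ, T1 u τ k := rfl
lemma jTheta2_def (u τ : ℂ) : jTheta2 u τ = ∑' k : ℤ, T2 u τ k := rfl
lemma jTheta4_def (u τ : ℂ) : jTheta4 u τ = ∑' k : ℤ, T4 u τ k := rfl

lemma negOne_zpow_mul_self (k : ℤ) : (-1 : ℂ) ^ k * (-1 : ℂ) ^ k = 1 := by
  rw [← mul_zpow]; norm_num

lemma negOne_zpow_neg (k : ℤ) : (-1 : ℂ) ^ (-k) = (-1 : ℂ) ^ k := by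
  rw [zpow_neg]
  exact inv_eq_of_mul_eq_one_left (negOne_zpow_mul_self k)

lemma T2_eq (u τ : ℂ) (k : ℤ) :
    T2 u τ k = exp (Real.pi * I * τ / 4 + Real.pi * I * u) * jacobiTheta₂_term k (u + τ/2) τ := by
  unfold T2 jacobiTheta₂_term
  rw [← Complex.exp_add, ← Complex.exp_add]
  congr 1
  ring

lemma T4_eq (u τ : ℂ) (k : ℤ) :
    T4 u τ k = (-1 : ℂ) ^ k * jacobiTheta₂_term k u τ := by
  unfold T4 jacobiTheta₂_term
  rw [mul_assoc, ← Complex.exp_add]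
  congr 2
  ring

lemma norm_negOne_zpow (k : ℤ) : ‖(-1 : ℂ) ^ k‖ = 1 := by
  rw [norm_zpow, norm_neg, norm_one, one_zpow]

lemma summable_norm_T2 (u τ : ℂ) (hτ : 0 < τ.im) :
    Summable fun k : ℤ => ‖T2 u τ k‖ := by
  have h1 : Summable (jacobiTheta₂_term · (u + τ/2) τ) :=
    (summable_jacobiTheta₂_term_iff _ _).mpr hτ
  have h2 : Summable fun k : ℤ => ‖jacobiTheta₂_term k (u + τ/2) τ‖ :=
    summable_norm_iff.mpr h1
  refine (h2.mul_left ‖exp (Real.pi * I * τ / 4 + Real.pi * I * u)‖).congr fun k => ?_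
  rw [← norm_mul, ← T2_eq]

lemma summable_norm_T1 (u τ : ℂ) (hτ : 0 < τ.im) :
    Summable fun k : ℤ => ‖T1 u τ k‖ := by
  refine (summable_norm_T2 u τ hτ).congr fun k => ?_
  unfold T1 T2
  simp [norm_mul, norm_negOne_zpow]

lemma summable_norm_T4 (u τ : ℂ) (hτ : 0 < τ.im) :
    Summable fun k : ℤ => ‖T4 u τ k‖ := by
  have h1 : Summable (jacobiTheta₂_term · u τ) :=
    (summable_jacobiTheta₂_term_iff _ _).mpr hτ
  have h2 : Summable fun k : ℤ => ‖jacobiTheta₂_term k u τ‖ :=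
    summable_norm_iff.mpr h1
  refine h2.congr fun k => ?_
  rw [T4_eq, norm_mul, norm_negOne_zpow, one_mul]

lemma jTheta1_neg (u τ : ℂ) : jTheta1 (-u) τ = -jTheta1 u τ := by
  rw [jTheta1_def, jTheta1_def]
  have e : ∑' k : ℤ, T1 (-u) τ k = ∑' k : ℤ, T1 (-u) τ (-k - 1) :=
    ((Equiv.mk (fun k : ℤ => -k - 1) (fun k => -k - 1) (fun k => by ring) (fun k => by ring)).tsum_eq
      (T1 (-u) τ)).symm
  rw [e]
  have : ∀ k : ℤ, T1 (-u) τ (-k - 1) = -T1 u τ k := by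
    intro k
    unfold T1
    have hs : (-1 : ℂ) ^ (-k - 1) = -(-1 : ℂ) ^ k := by
      rw [show (-k - 1 : ℤ) = -(k + 1) by ring, negOne_zpow_neg,
        zpow_add₀ (by norm_num : (-1 : ℂ) ≠ 0), zpow_one]
      ring
    rw [hs]
    push_cast
    rw [show ((-(k:ℂ) - 1) + 1/2)^2 = ((k:ℂ) + 1/2)^2 by ring,
      show Real.pi * I * (2 * (-(k:ℂ) - 1) + 1) * -u = Real.pi * I * (2 * (k:ℂ) + 1) * u by ring]
    ring
  rw [tsum_congr this, tsum_neg]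
  ring

lemma jTheta4_neg (u τ : ℂ) : jTheta4 (-u) τ = jTheta4 u τ := by
  rw [jTheta4_def, jTheta4_def]
  have e : ∑' k : ℤ, T4 (-u) τ k = ∑' k : ℤ, T4 (-u) τ (-k) :=
    ((Equiv.mk (fun k : ℤ => -k) (fun k => -k) (fun k => by ring) (fun k => by ring)).tsum_eq
      (T4 (-u) τ)).symm
  rw [e]
  refine tsum_congr fun k => ?_
  unfold T4
  rw [negOne_zpow_neg]
  push_cast
  rw [show (-(k:ℂ))^2 = (k:ℂ)^2 by ring,
    show 2 * (Real.pi:ℂ) * I * (-(k:ℂ)) * -u = 2 * Real.pi * I * (k:ℂ) * u by ring]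


def e1 (p : ℤ × ℤ) : ℤ × ℤ := (p.1 + p.2, p.1 - p.2)
def e2 (p : ℤ × ℤ) : ℤ × ℤ := (p.1 + p.2, p.1 - p.2 - 1)

lemma he1 : Function.Injective e1 := by
  rintro ⟨a, b⟩ ⟨c, d⟩ h
  simp only [e1, Prod.mk.injEq] at h
  have : a = c ∧ b = d := by omega
  simp [this.1, this.2]

lemma he2 : Function.Injective e2 := by
  rintro ⟨a, b⟩ ⟨c, d⟩ h
  simp only [e2, Prod.mk.injEq] at h
  have : a = c ∧ b = d := by omega
  simp [this.1, this.2]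

lemma mem_range_e1 (p : ℤ × ℤ) : p ∈ Set.range e1 ↔ (p.1 - p.2) % 2 = 0 := by
  constructor
  · rintro ⟨⟨a, b⟩, rfl⟩
    simp only [e1]
    omega
  · intro h
    exact ⟨((p.1 + p.2) / 2, (p.1 - p.2) / 2), by simp only [e1, Prod.ext_iff]; omega⟩

lemma mem_range_e2 (p : ℤ × ℤ) : p ∈ Set.range e2 ↔ (p.1 - p.2) % 2 ≠ 0 := by
  constructor
  · rintro ⟨⟨a, b⟩, rfl⟩
    simp only [e2]
    omega
  · intro h
    exact ⟨((p.1 + p.2 + 1) / 2, (p.1 - p.2 - 1) / 2), by simp only [e2, Prod.ext_iff]; omega⟩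

lemma compl_range_e1 : (Set.range e1)ᶜ = Set.range e2 := by
  ext p
  simp only [Set.mem_compl_iff, mem_range_e1, mem_range_e2]

lemma four_exp (p1 p2 p3 p4 q1 q2 q3 q4 : ℂ) (h : p1 + p2 + p3 + p4 = q1 + q2 + q3 + q4) :
    exp p1 * exp p2 * (exp p3 * exp p4) = exp q1 * exp q2 * (exp q3 * exp q4) := by
  rw [← Complex.exp_add, ← Complex.exp_add, ← Complex.exp_add,
    ← Complex.exp_add, ← Complex.exp_add, ← Complex.exp_add]
  congr 1
  linear_combination h

lemma key1_s9 (x y τ : ℂ) (a b : ℤ) :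
    T1 x τ (a + b) * T2 y τ (a - b) = T1 (x + y) (2*τ) a * T4 (x - y) (2*τ) b := by
  unfold T1 T2 T4
  rw [zpow_add₀ (by norm_num : (-1 : ℂ) ≠ 0)]
  push_cast
  calc (-1:ℂ) ^ a * (-1:ℂ) ^ b * exp (Real.pi * I * τ * (((a:ℂ) + b) + 1/2)^2) *
        exp (Real.pi * I * (2*((a:ℂ) + b) + 1) * x) *
        (exp (Real.pi * I * τ * (((a:ℂ) - b) + 1/2)^2) * exp (Real.pi * I * (2*((a:ℂ) - b) + 1) * y))
      = ((-1:ℂ) ^ a * (-1:ℂ) ^ b) *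
        (exp (Real.pi * I * τ * (((a:ℂ) + b) + 1/2)^2) * exp (Real.pi * I * (2*((a:ℂ) + b) + 1) * x) *
        (exp (Real.pi * I * τ * (((a:ℂ) - b) + 1/2)^2) * exp (Real.pi * I * (2*((a:ℂ) - b) + 1) * y))) := by
        ring
    _ = ((-1:ℂ) ^ a * (-1:ℂ) ^ b) *
        (exp (Real.pi * I * (2*τ) * ((a:ℂ) + 1/2)^2) * exp (Real.pi * I * (2*(a:ℂ) + 1) * (x + y)) *
        (exp (Real.pi * I * (2*τ) * (b:ℂ)^2) * exp (2 * Real.pi * I * (b:ℂ) * (x - y)))) := by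
        congr 1
        refine four_exp _ _ _ _ _ _ _ _ ?_
        ring
    _ = (-1:ℂ) ^ a * exp (Real.pi * I * (2*τ) * ((a:ℂ) + 1/2)^2) * exp (Real.pi * I * (2*(a:ℂ) + 1) * (x + y)) *
        ((-1:ℂ) ^ b * exp (Real.pi * I * (2*τ) * (b:ℂ)^2) * exp (2 * Real.pi * I * (b:ℂ) * (x - y))) := by
        ring

lemma key2_s9 (x y τ : ℂ) (a b : ℤ) :
    T1 x τ (a + b) * T2 y τ (a - b - 1) = T4 (x + y) (2*τ) a * T1 (x - y) (2*τ) b := by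
  unfold T1 T2 T4
  rw [zpow_add₀ (by norm_num : (-1 : ℂ) ≠ 0)]
  push_cast
  calc (-1:ℂ) ^ a * (-1:ℂ) ^ b * exp (Real.pi * I * τ * (((a:ℂ) + b) + 1/2)^2) *
        exp (Real.pi * I * (2*((a:ℂ) + b) + 1) * x) *
        (exp (Real.pi * I * τ * (((a:ℂ) - b - 1) + 1/2)^2) * exp (Real.pi * I * (2*((a:ℂ) - b - 1) + 1) * y))
      = ((-1:ℂ) ^ a * (-1:ℂ) ^ b) *
        (exp (Real.pi * I * τ * (((a:ℂ) + b) + 1/2)^2) * exp (Real.pi * I * (2*((a:ℂ) + b) + 1) * x) *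
        (exp (Real.pi * I * τ * (((a:ℂ) - b - 1) + 1/2)^2) * exp (Real.pi * I * (2*((a:ℂ) - b - 1) + 1) * y))) := by
        ring
    _ = ((-1:ℂ) ^ a * (-1:ℂ) ^ b) *
        (exp (Real.pi * I * (2*τ) * (a:ℂ)^2) * exp (2 * Real.pi * I * (a:ℂ) * (x + y)) *
        (exp (Real.pi * I * (2*τ) * ((b:ℂ) + 1/2)^2) * exp (Real.pi * I * (2*(b:ℂ) + 1) * (x - y)))) := by
        congr 1
        refine four_exp _ _ _ _ _ _ _ _ ?_
        ring
    _ = (-1:ℂ) ^ a * exp (Real.pi * I * (2*τ) * (a:ℂ)^2) * exp (2 * Real.pi * I * (a:ℂ) * (x + y)) *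
        ((-1:ℂ) ^ b * exp (Real.pi * I * (2*τ) * ((b:ℂ) + 1/2)^2) * exp (Real.pi * I * (2*(b:ℂ) + 1) * (x - y))) := by
        ring

lemma landen (x y τ : ℂ) (hτ : 0 < τ.im) :
    jTheta1 x τ * jTheta2 y τ =
      jTheta1 (x + y) (2*τ) * jTheta4 (x - y) (2*τ) +
      jTheta4 (x + y) (2*τ) * jTheta1 (x - y) (2*τ) := by
  have h2τ : 0 < (2*τ).im := by
    have : (2*τ).im = 2 * τ.im := by simp [Complex.mul_im]
    rw [this]; linarith
  have hA := summable_norm_T1 x τ hτ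
  have hB := summable_norm_T2 y τ hτ
  have hg1 := summable_norm_T1 (x + y) (2*τ) h2τ
  have hg2 := summable_norm_T4 (x - y) (2*τ) h2τ
  have hg3 := summable_norm_T4 (x + y) (2*τ) h2τ
  have hg4 := summable_norm_T1 (x - y) (2*τ) h2τ
  have hf : Summable fun p : ℤ × ℤ => T1 x τ p.1 * T2 y τ p.2 :=
    summable_mul_of_summable_norm hA hB
  have e0 : jTheta1 x τ * jTheta2 y τ = -I * ∑' p : ℤ × ℤ, T1 x τ p.1 * T2 y τ p.2 := by
    rw [jTheta1_def, jTheta2_def, mul_assoc, tsum_mul_tsum_of_summable_norm hA hB]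
  have hsplit := Summable.tsum_subtype_add_tsum_subtype_compl hf (Set.range e1)
  have hI1 : (∑' p : (Set.range e1), T1 x τ (p : ℤ × ℤ).1 * T2 y τ (p : ℤ × ℤ).2) =
      (∑' k : ℤ, T1 (x + y) (2*τ) k) * ∑' k : ℤ, T4 (x - y) (2*τ) k := by
    rw [← (Equiv.ofInjective e1 he1).tsum_eq
      (fun p : (Set.range e1) => T1 x τ (p : ℤ × ℤ).1 * T2 y τ (p : ℤ × ℤ).2)]
    rw [tsum_mul_tsum_of_summable_norm hg1 hg2]
    refine tsum_congr fun p => ?_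
    rcases p with ⟨a, b⟩
    exact key1_s9 x y τ a b
  have hI2 : (∑' p : ((Set.range e1)ᶜ : Set (ℤ × ℤ)), T1 x τ (p : ℤ × ℤ).1 * T2 y τ (p : ℤ × ℤ).2) =
      (∑' k : ℤ, T4 (x + y) (2*τ) k) * ∑' k : ℤ, T1 (x - y) (2*τ) k := by
    rw [compl_range_e1]
    rw [← (Equiv.ofInjective e2 he2).tsum_eq
      (fun p : (Set.range e2) => T1 x τ (p : ℤ × ℤ).1 * T2 y τ (p : ℤ × ℤ).2)]
    rw [tsum_mul_tsum_of_summable_norm hg3 hg4]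
    refine tsum_congr fun p => ?_
    rcases p with ⟨a, b⟩
    exact key2_s9 x y τ a b
  rw [e0, ← hsplit, hI1, hI2]
  simp only [jTheta1_def, jTheta4_def]
  ring

end ThetaAux

theorem theta_three_term_identity_Omm1 (x y ξ v τ : ℂ) (hτ : 0 < τ.im) :
    jTheta1 x τ * jTheta2 (y + ξ) τ * jTheta2 (v + y) τ * jTheta1 (v - ξ - x) τ -
      jTheta2 0 τ * jTheta1 (x + y + ξ) τ * jTheta1 (v - x + y) τ * jTheta2 (v - ξ) τ =
    -(jTheta2 x τ * jTheta1 (y + ξ) τ * jTheta1 (v + y) τ * jTheta2 (v - ξ - x) τ) := by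
  have h1 := ThetaAux.landen x (y + ξ) τ hτ
  rw [show x + (y + ξ) = x + y + ξ by ring, show x - (y + ξ) = x - y - ξ by ring] at h1
  have h2 := ThetaAux.landen (v - ξ - x) (v + y) τ hτ
  rw [show v - ξ - x + (v + y) = 2*v + y - ξ - x by ring,
    show v - ξ - x - (v + y) = -(x + y + ξ) by ring,
    ThetaAux.jTheta1_neg, ThetaAux.jTheta4_neg] at h2
  have h3 := ThetaAux.landen (x + y + ξ) 0 τ hτ
  rw [add_zero, sub_zero] at h3
  have h4 := ThetaAux.landen (v - x + y) (v - ξ) τ hτ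
  rw [show v - x + y + (v - ξ) = 2*v + y - ξ - x by ring,
    show v - x + y - (v - ξ) = -(x - y - ξ) by ring,
    ThetaAux.jTheta1_neg, ThetaAux.jTheta4_neg] at h4
  have h5 := ThetaAux.landen (y + ξ) x τ hτ
  rw [show y + ξ + x = x + y + ξ by ring, show y + ξ - x = -(x - y - ξ) by ring,
    ThetaAux.jTheta1_neg, ThetaAux.jTheta4_neg] at h5
  have h6 := ThetaAux.landen (v + y) (v - ξ - x) τ hτ
  rw [show v + y + (v - ξ - x) = 2*v + y - ξ - x by ring,
    show v + y - (v - ξ - x) = x + y + ξ by ring] at h6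
  set P1 := jTheta1 (x + y + ξ) (2*τ) with hP1
  set Q1 := jTheta4 (x + y + ξ) (2*τ) with hQ1
  set P2 := jTheta1 (x - y - ξ) (2*τ) with hP2
  set Q2 := jTheta4 (x - y - ξ) (2*τ) with hQ2
  set P3 := jTheta1 (2*v + y - ξ - x) (2*τ) with hP3
  set Q3 := jTheta4 (2*v + y - ξ - x) (2*τ) with hQ3
  linear_combination
    (jTheta2 (v + y) τ * jTheta1 (v - ξ - x) τ) * h1 +
    (P1*Q2 + Q1*P2) * h2 -
    (jTheta1 (v - x + y) τ * jTheta2 (v - ξ) τ) * h3 -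
    (2*P1*Q1) * h4 +
    (jTheta1 (v + y) τ * jTheta2 (v - ξ - x) τ) * h5 +
    (P1*Q2 - Q1*P2) * h6
end

section
/- For all complex x, y, ξ, v and τ with Im τ > 0, setting s = x+y and t = x−y: θ1(x)θ2(y+ξ)θ1(v+y)θ2(v−ξ+x) − θ2(0)θ1(t−ξ)θ2(v+s)θ1(v−ξ) = θ2(x)θ1(y+ξ)θ2(v+y)θ1(v−ξ+x), where all theta functions have modular parameter τ. -/
open Complex

/-! ### Auxiliary definitions -/

noncomputable def t1 (τ u : ℂ) (k : ℤ) : ℂ :=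
  (-1 : ℂ) ^ k * exp (Real.pi * I * τ * ((k : ℂ) + 1/2)^2) *
    exp (Real.pi * I * (2*(k : ℂ) + 1) * u)

noncomputable def t2 (τ u : ℂ) (k : ℤ) : ℂ :=
  exp (Real.pi * I * τ * ((k : ℂ) + 1/2)^2) * exp (Real.pi * I * (2*(k : ℂ) + 1) * u)

noncomputable def t4 (τ u : ℂ) (k : ℤ) : ℂ :=
  (-1 : ℂ) ^ k * exp (Real.pi * I * τ * (k : ℂ)^2) * exp (2 * Real.pi * I * (k : ℂ) * u)

lemma jTheta1_eq (u τ : ℂ) : jTheta1 u τ = -I * ∑' k : ℤ, t1 τ u k := rfl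
lemma jTheta2_eq (u τ : ℂ) : jTheta2 u τ = ∑' k : ℤ, t2 τ u k := rfl
lemma jTheta4_eq (u τ : ℂ) : jTheta4 u τ = ∑' k : ℤ, t4 τ u k := rfl

lemma neg_one_ne : ((-1 : ℂ) ≠ 0) := by norm_num

lemma neg_one_zpow_neg (k : ℤ) : (-1 : ℂ) ^ (-k) = (-1 : ℂ) ^ k := by
  rw [zpow_neg, ← inv_zpow, inv_neg_one]

lemma t1_eq (τ u : ℂ) (k : ℤ) :
    t1 τ u k = (-1 : ℂ) ^ k *
      exp (Real.pi * I * (τ * ((k : ℂ) + 1/2)^2 + (2*(k : ℂ) + 1) * u)) := by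
  rw [t1, mul_assoc, ← Complex.exp_add]
  congr 2
  ring

lemma t2_eq (τ u : ℂ) (k : ℤ) :
    t2 τ u k = exp (Real.pi * I * (τ * ((k : ℂ) + 1/2)^2 + (2*(k : ℂ) + 1) * u)) := by
  rw [t2, ← Complex.exp_add]
  congr 1
  ring

lemma t4_eq (τ u : ℂ) (k : ℤ) :
    t4 τ u k = (-1 : ℂ) ^ k *
      exp (Real.pi * I * (τ * (k : ℂ)^2 + 2 * (k : ℂ) * u)) := by
  rw [t4, mul_assoc, ← Complex.exp_add]
  congr 2
  ring

/-! ### Summability -/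

lemma t2_eq_jt (τ u : ℂ) (k : ℤ) :
    t2 τ u k = jacobiTheta₂_term k (u + τ/2) τ *
      exp (Real.pi * I * τ / 4 + Real.pi * I * u) := by
  rw [t2_eq, jacobiTheta₂_term, ← Complex.exp_add]
  congr 1
  ring

lemma t4_eq_jt (τ u : ℂ) (k : ℤ) :
    t4 τ u k = (-1 : ℂ) ^ k * jacobiTheta₂_term k u τ := by
  rw [t4_eq, jacobiTheta₂_term]
  congr 2
  ring

lemma summable_norm_t2 {τ : ℂ} (u : ℂ) (hτ : 0 < τ.im) :
    Summable (fun k : ℤ => ‖t2 τ u k‖) := by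
  have h := (summable_jacobiTheta₂_term_iff (u + τ/2) τ).mpr hτ
  have h2 := ((summable_norm_iff.mpr h).mul_right
    ‖exp (Real.pi * I * τ / 4 + Real.pi * I * u)‖)
  exact h2.congr fun k => by rw [← norm_mul, ← t2_eq_jt]

lemma norm_t1 (τ u : ℂ) (k : ℤ) : ‖t1 τ u k‖ = ‖t2 τ u k‖ := by
  rw [t1_eq, t2_eq, norm_mul, norm_zpow, norm_neg, norm_one, one_zpow, one_mul]

lemma summable_norm_t1 {τ : ℂ} (u : ℂ) (hτ : 0 < τ.im) :
    Summable (fun k : ℤ => ‖t1 τ u k‖) :=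
  (summable_norm_t2 u hτ).congr fun k => (norm_t1 τ u k).symm

lemma summable_norm_t4 {τ : ℂ} (u : ℂ) (hτ : 0 < τ.im) :
    Summable (fun k : ℤ => ‖t4 τ u k‖) := by
  have h := summable_norm_iff.mpr ((summable_jacobiTheta₂_term_iff u τ).mpr hτ)
  exact h.congr fun k => by
    rw [t4_eq_jt, norm_mul, norm_zpow, norm_neg, norm_one, one_zpow, one_mul]

/-! ### Parity equivalence -/

def parEquiv : ((ℤ × ℤ) ⊕ (ℤ × ℤ)) ≃ ℤ × ℤ where
  toFun x := match x with
    | .inl y => (y.1 + y.2, y.1 - y.2)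
    | .inr y => (y.1 + y.2, y.1 - y.2 - 1)
  invFun y :=
    if (y.1 + y.2) % 2 = 0 then .inl ((y.1 + y.2) / 2, (y.1 - y.2) / 2)
    else .inr ((y.1 + y.2 + 1) / 2, (y.1 - y.2 - 1) / 2)
  left_inv x := by
    rcases x with y | y
    · dsimp only
      rw [if_pos (by omega)]
      simp only [Sum.inl.injEq, Prod.ext_iff]
      constructor <;> omega
    · dsimp only
      rw [if_neg (by omega)]
      simp only [Sum.inr.injEq, Prod.ext_iff]
      constructor <;> omega
  right_inv y := by
    dsimp only
    by_cases h : (y.1 + y.2) % 2 = 0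
    · rw [if_pos h]
      dsimp only
      rw [Prod.ext_iff]
      constructor <;> omega
    · rw [if_neg h]
      dsimp only
      rw [Prod.ext_iff]
      constructor <;> omega

lemma hasSum_sumType {α β : Type*} {f : α ⊕ β → ℂ} {a b : ℂ}
    (ha : HasSum (fun x => f (Sum.inl x)) a) (hb : HasSum (fun x => f (Sum.inr x)) b) :
    HasSum f (a + b) := by
  have h1 : HasSum (f ∘ (↑) : Set.range (Sum.inl : α → α ⊕ β) → ℂ) a := by
    exact (Function.Injective.hasSum_range_iff Sum.inl_injective).mpr ha
  have h2 : HasSum (f ∘ (↑) : Set.range (Sum.inr : β → α ⊕ β) → ℂ) b := by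
    exact (Function.Injective.hasSum_range_iff Sum.inr_injective).mpr hb
  exact h1.add_isCompl Set.isCompl_range_inl_range_inr h2

/-! ### Term identities -/

lemma inl_term (τ a b : ℂ) (p r : ℤ) :
    t1 τ a (p + r) * t2 τ b (p - r) = t1 (2*τ) (a+b) p * t4 (2*τ) (a-b) r := by
  rw [t1_eq, t2_eq, t1_eq, t4_eq, mul_assoc, ← Complex.exp_add,
    mul_mul_mul_comm, ← Complex.exp_add, ← zpow_add₀ neg_one_ne]
  congr 2
  push_cast
  ring

lemma inr_term (τ a b : ℂ) (p r : ℤ) :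
    t1 τ a (p + r) * t2 τ b (p - r - 1) = t4 (2*τ) (a+b) p * t1 (2*τ) (a-b) r := by
  rw [t1_eq, t2_eq, t4_eq, t1_eq, mul_assoc, ← Complex.exp_add,
    mul_mul_mul_comm, ← Complex.exp_add, ← zpow_add₀ neg_one_ne]
  congr 2
  push_cast
  ring

/-! ### Negation (parity of θ₁, θ₄) -/

def negSubEquiv : ℤ ≃ ℤ := ⟨fun k => -1 - k, fun k => -1 - k, fun k => by ring, fun k => by ring⟩

lemma jTheta1_neg (u τ : ℂ) : jTheta1 (-u) τ = -jTheta1 u τ := by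
  rw [jTheta1_eq, jTheta1_eq]
  have key : ∑' k : ℤ, t1 τ (-u) k = ∑' k : ℤ, -t1 τ u k := by
    rw [← negSubEquiv.tsum_eq (fun k => t1 τ (-u) k)]
    refine tsum_congr fun k => ?_
    show t1 τ (-u) (-1 - k) = -t1 τ u k
    rw [t1_eq, t1_eq]
    have hs : (-1 : ℂ) ^ (-1 - k) = -((-1 : ℂ) ^ k) := by
      rw [show (-1 - k : ℤ) = -(1 + k) by ring, neg_one_zpow_neg,
        zpow_add₀ neg_one_ne, zpow_one]
      ring
    rw [hs]
    rw [show ((-1 - k : ℤ) : ℂ) = -1 - (k : ℂ) by push_cast; ring]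
    rw [show Real.pi * I * (τ * ((-1 - (k:ℂ)) + 1/2)^2 + (2*(-1 - (k:ℂ)) + 1) * (-u)) =
      Real.pi * I * (τ * ((k:ℂ) + 1/2)^2 + (2*(k:ℂ) + 1) * u) by ring]
    ring
  rw [key, tsum_neg]
  ring

lemma jTheta4_neg (u τ : ℂ) : jTheta4 (-u) τ = jTheta4 u τ := by
  rw [jTheta4_eq, jTheta4_eq, ← (Equiv.neg ℤ).tsum_eq (fun k => t4 τ (-u) k)]
  refine tsum_congr fun k => ?_
  show t4 τ (-u) (-k) = t4 τ u k
  rw [t4_eq, t4_eq, neg_one_zpow_neg]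
  rw [show ((-k : ℤ) : ℂ) = -(k : ℂ) by push_cast; ring]
  rw [show Real.pi * I * (τ * (-(k:ℂ))^2 + 2 * (-(k:ℂ)) * (-u)) =
    Real.pi * I * (τ * (k:ℂ)^2 + 2 * (k:ℂ) * u) by ring]

/-! ### Addition formula -/

lemma theta_add (τ a b : ℂ) (hτ : 0 < τ.im) :
    jTheta1 a τ * jTheta2 b τ =
      jTheta1 (a+b) (2*τ) * jTheta4 (a-b) (2*τ) +
        jTheta4 (a+b) (2*τ) * jTheta1 (a-b) (2*τ) := by
  have h2 : 0 < (2*τ).im := by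
    have : (2*τ).im = 2 * τ.im := by simp [Complex.mul_im]
    rw [this]; linarith
  rw [jTheta1_eq, jTheta2_eq, jTheta4_eq, jTheta1_eq, jTheta4_eq, jTheta1_eq]
  have hG1 : Summable (fun z : ℤ × ℤ => t1 (2*τ) (a+b) z.1 * t4 (2*τ) (a-b) z.2) :=
    summable_mul_of_summable_norm (summable_norm_t1 (a+b) h2) (summable_norm_t4 (a-b) h2)
  have hG2 : Summable (fun z : ℤ × ℤ => t4 (2*τ) (a+b) z.1 * t1 (2*τ) (a-b) z.2) :=
    summable_mul_of_summable_norm (summable_norm_t4 (a+b) h2) (summable_norm_t1 (a-b) h2)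
  have h : (∑' k : ℤ, t1 τ a k) * (∑' k : ℤ, t2 τ b k) =
      (∑' k : ℤ, t1 (2*τ) (a+b) k) * (∑' k : ℤ, t4 (2*τ) (a-b) k) +
      (∑' k : ℤ, t4 (2*τ) (a+b) k) * (∑' k : ℤ, t1 (2*τ) (a-b) k) := by
    rw [tsum_mul_tsum_of_summable_norm (summable_norm_t1 a hτ) (summable_norm_t2 b hτ),
      tsum_mul_tsum_of_summable_norm (summable_norm_t1 (a+b) h2) (summable_norm_t4 (a-b) h2),
      tsum_mul_tsum_of_summable_norm (summable_norm_t4 (a+b) h2) (summable_norm_t1 (a-b) h2)]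
    have key : HasSum (fun z : ℤ × ℤ => t1 τ a z.1 * t2 τ b z.2)
        ((∑' z : ℤ × ℤ, t1 (2*τ) (a+b) z.1 * t4 (2*τ) (a-b) z.2) +
         (∑' z : ℤ × ℤ, t4 (2*τ) (a+b) z.1 * t1 (2*τ) (a-b) z.2)) := by
      rw [← parEquiv.hasSum_iff]
      refine hasSum_sumType ?_ ?_
      · have e1 : (fun z : ℤ × ℤ => t1 (2*τ) (a+b) z.1 * t4 (2*τ) (a-b) z.2) =
            (fun p : ℤ × ℤ =>
              t1 τ a ((parEquiv (Sum.inl p)).1) * t2 τ b ((parEquiv (Sum.inl p)).2)) := by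
          funext p
          exact (inl_term τ a b p.1 p.2).symm
        exact e1 ▸ hG1.hasSum
      · have e2 : (fun z : ℤ × ℤ => t4 (2*τ) (a+b) z.1 * t1 (2*τ) (a-b) z.2) =
            (fun p : ℤ × ℤ =>
              t1 τ a ((parEquiv (Sum.inr p)).1) * t2 τ b ((parEquiv (Sum.inr p)).2)) := by
          funext p
          exact (inr_term τ a b p.1 p.2).symm
        exact e2 ▸ hG2.hasSum
    exact key.tsum_eq
  linear_combination (-I) * h

theorem theta_three_term_identity_Omm2 (x y ξ v τ : ℂ) (hτ : 0 < τ.im)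
    (s t : ℂ) (hs : s = x + y) (ht : t = x - y) :
    jTheta1 x τ * jTheta2 (y + ξ) τ * jTheta1 (v + y) τ * jTheta2 (v - ξ + x) τ -
      jTheta2 0 τ * jTheta1 (t - ξ) τ * jTheta2 (v + s) τ * jTheta1 (v - ξ) τ =
    jTheta2 x τ * jTheta1 (y + ξ) τ * jTheta2 (v + y) τ * jTheta1 (v - ξ + x) τ := by
  subst hs ht
  have E1 := theta_add τ x (y + ξ) hτ
  rw [show x + (y + ξ) = x + y + ξ by ring, show x - (y + ξ) = x - y - ξ by ring] at E1
  have E2 := theta_add τ (v + y) (v - ξ + x) hτ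
  rw [show v + y + (v - ξ + x) = 2*v + x + y - ξ by ring,
    show v + y - (v - ξ + x) = -(x - y - ξ) by ring, jTheta1_neg, jTheta4_neg] at E2
  have E3 := theta_add τ (x - y - ξ) 0 hτ
  rw [add_zero, sub_zero] at E3
  have E4 := theta_add τ (v - ξ) (v + (x + y)) hτ
  rw [show v - ξ + (v + (x + y)) = 2*v + x + y - ξ by ring,
    show v - ξ - (v + (x + y)) = -(x + y + ξ) by ring, jTheta1_neg, jTheta4_neg] at E4
  have E5 := theta_add τ (y + ξ) x hτ
  rw [show y + ξ + x = x + y + ξ by ring,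
    show y + ξ - x = -(x - y - ξ) by ring, jTheta1_neg, jTheta4_neg] at E5
  have E6 := theta_add τ (v - ξ + x) (v + y) hτ
  rw [show v - ξ + x + (v + y) = 2*v + x + y - ξ by ring,
    show v - ξ + x - (v + y) = x - y - ξ by ring] at E6
  linear_combination
    (jTheta1 (v + y) τ * jTheta2 (v - ξ + x) τ) * E1 +
    (jTheta1 (x + y + ξ) (2*τ) * jTheta4 (x - y - ξ) (2*τ) +
      jTheta4 (x + y + ξ) (2*τ) * jTheta1 (x - y - ξ) (2*τ)) * E2 -
    (jTheta2 (v + (x + y)) τ * jTheta1 (v - ξ) τ) * E3 -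
    (2 * (jTheta1 (x - y - ξ) (2*τ) * jTheta4 (x - y - ξ) (2*τ))) * E4 -
    (jTheta2 (v + y) τ * jTheta1 (v - ξ + x) τ) * E5 -
    (jTheta1 (x + y + ξ) (2*τ) * jTheta4 (x - y - ξ) (2*τ) -
      jTheta4 (x + y + ξ) (2*τ) * jTheta1 (x - y - ξ) (2*τ)) * E6
end
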